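/- Suppose agent a's observation record R stops at the end of finite play ρ and its last entry is (|ρ|−1, o). Then for all finite plays ρ', ρ'' that extend ρ (i.e. have ρ as a prefix), ρ' and ρ'' are related by the static perfect-recall relation for observation o if and only if they are related by the dynamic-observation relation ≈ᴿₐ. -/

import Mathlib

variable {V Obs : Type*}

/-- The observation changes recorded at time `n`. -/
def obsAt (rec : List (ℕ × Obs)) (n : ℕ) : List Obs :=
  (rec.filter (fun e => e.1 = n)).map Prod.snd

/-- The observation sequence with which the agent observes the game at time `n`. -/
def obsSeq (rec : List (ℕ × Obs)) : ℕ → List Obs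
  | 0 => obsAt rec 0
  | n + 1 => (obsSeq rec n).getLast?.toList ++ obsAt rec (n + 1)

/-- Dynamic-observation indistinguishability on finite plays. -/
def dynEq (interp : Obs → V → V → Prop) (rec : List (ℕ × Obs))
    (ρ ρ' : List V) : Prop :=
  ρ.length = ρ'.length ∧
  ∀ (i : ℕ) (h : i < ρ.length) (h' : i < ρ'.length),
    ∀ o ∈ obsSeq rec i, interp o (ρ.get ⟨i, h⟩) (ρ'.get ⟨i, h'⟩)

/-- Static perfect-recall indistinguishability for a fixed observation. -/
def staticEq (interp : Obs → V → V → Prop) (o : Obs) (ρ ρ' : List V) : Prop :=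
  List.Forall₂ (interp o) ρ ρ'

/-!
Since the record stops at time `|ρ| - 1` and ends with `(|ρ| - 1, o)`, the observation sequence
carries the single observation `o` at every later time. Positions before `|ρ|` are occupied by the
common prefix `ρ`, so both relations hold there by reflexivity; at the remaining positions both
relations reduce to `interp o`.
-/

theorem obsAt_eq_nil_of_lt {rec : List (ℕ × Obs)} {n m : ℕ} (hstops : ∀ e ∈ rec, e.1 ≤ n)
    (hm : n < m) : obsAt rec m = [] := by
  simp only [obsAt, List.map_eq_nil_iff, List.filter_eq_nil_iff, decide_eq_true_eq]
  intro e he hm'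
  have := hstops e he
  omega

theorem getLast?_obsAt_of_getLast_eq {rec : List (ℕ × Obs)} (hrec : rec ≠ []) {n : ℕ} {o : Obs}
    (hlast : rec.getLast hrec = (n, o)) : (obsAt rec n).getLast? = some o := by
  rw [obsAt, ← List.dropLast_append_getLast hrec, hlast]
  simp

theorem getLast?_obsSeq_of_getLast?_obsAt {rec : List (ℕ × Obs)} {n : ℕ} {o : Obs}
    (h : (obsAt rec n).getLast? = some o) : (obsSeq rec n).getLast? = some o := by
  cases n with
  | zero => exact h
  | succ n => rw [obsSeq, List.getLast?_append, h]; rfl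

theorem obsSeq_eq_singleton_of_lt {rec : List (ℕ × Obs)} {n : ℕ} {o : Obs}
    (hstops : ∀ e ∈ rec, e.1 ≤ n) (hlast : (obsSeq rec n).getLast? = some o) :
    ∀ m, n < m → obsSeq rec m = [o] := by
  intro m hm
  induction m, hm using Nat.le_induction with
  | base => simp [obsSeq, hlast, obsAt_eq_nil_of_lt hstops (Nat.lt_succ_self n)]
  | succ m hm ih => simp [obsSeq, ih, obsAt_eq_nil_of_lt (m := m + 1) hstops (by omega)]

theorem staticEq_iff_dynEq_of_getElem_eq {interp : Obs → V → V → Prop}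
    (hrefl : ∀ o a, interp o a a) {rec : List (ℕ × Obs)} {o : Obs} {ρ ρ' : List V} {k : ℕ}
    (hagree : ∀ i (h : i < ρ.length) (h' : i < ρ'.length), i < k → ρ[i] = ρ'[i])
    (hobs : ∀ i, k ≤ i → obsSeq rec i = [o]) :
    staticEq interp o ρ ρ' ↔ dynEq interp rec ρ ρ' := by
  rw [staticEq, List.forall₂_iff_get, dynEq]
  refine and_congr_right fun _ => forall₂_congr fun i h => forall_congr' fun h' => ?_
  rcases lt_or_ge i k with hi | hi
  · simp [hagree i h h' hi, hrefl]
  · simp [hobs i hi]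

theorem static_eq_dynamic_on_suffixes_general (interp : Obs → V → V → Prop)
    (hinterp : ∀ o, Equivalence (interp o))
    (rec : List (ℕ × Obs)) (ρ : List V) (o : Obs)
    (hne : ρ ≠ []) (hrecne : rec ≠ [])
    (hstops : ∀ e ∈ rec, e.1 ≤ ρ.length - 1)
    (hlast : rec.getLast hrecne = (ρ.length - 1, o)) :
    ∀ ρ' ρ'' : List V, ρ <+: ρ' → ρ <+: ρ'' →
      (staticEq interp o ρ' ρ'' ↔ dynEq interp rec ρ' ρ'') := by
  intro ρ' ρ'' hρ' hρ''
  have hlen : 0 < ρ.length := List.length_pos_iff.mpr hne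
  have hobs := obsSeq_eq_singleton_of_lt hstops
    (getLast?_obsSeq_of_getLast?_obsAt (getLast?_obsAt_of_getLast_eq hrecne hlast))
  refine staticEq_iff_dynEq_of_getElem_eq (fun o => (hinterp o).refl) (k := ρ.length) ?_
    fun i hi => hobs i (by omega)
  intro i _ _ hi
  rw [← hρ'.getElem hi, ← hρ''.getElem hi]

/-- If the record stops at the end of `ρ` and its last entry is `(|ρ|-1, o)`,
then on extensions of `ρ` the static relation for `o` coincides with the
dynamic relation of the record. -/
theorem static_eq_dynamic_on_suffixes (interp : Obs → V → V → Prop)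
    (hinterp : ∀ o, Equivalence (interp o))
    (rec : List (ℕ × Obs)) (ρ : List V) (o : Obs)
    (hne : ρ ≠ []) (hrecne : rec ≠ [])
    (hstops : ∀ e ∈ rec, e.1 ≤ ρ.length - 1)
    (hlast : rec.getLast hrecne = (ρ.length - 1, o))
    (hseq : ∀ i ≤ ρ.length - 1, obsSeq rec i ≠ []) :
    ∀ ρ' ρ'' : List V, ρ <+: ρ' → ρ <+: ρ'' →
      (staticEq interp o ρ' ρ'' ↔ dynEq interp rec ρ' ρ'') :=
  static_eq_dynamic_on_suffixes_general interp hinterp rec ρ o hne hrecne hstops hlast
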